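/- For any integer K ≥ 2 and reals a_1, ..., a_K with a_j ≥ 0, define h(z) = Σ_{j=1}^K 1/(2(z + a_j + 1)^2) for z ≥ 0. Then ∫_0^∞ h(z) e^{-h(z)} dz ≤ 2√2 √(K-1) + (e/√2)·√K · ∫_0^1 w^{-1/2} e^{-w} dw ≤ 5.7√K · (e/2), and in particular 2e·∫_0^∞ h(z)e^{-h(z)} dz ≤ 5.7√K. -/

import Mathlib

/-!
Since every `a j ≥ 0`, `h z ≤ K / (2 (z + 1)²)`, and `x e^{-x} ≤ min x e⁻¹` for `x ≥ 0`. Splitting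
the integral at `z₀ = √(2 (K - 1))`, the head contributes at most `z₀ / e` and the tail at most
`∫_{z₀}^∞ K / (2 (z + 1)²) dz = K / (2 (z₀ + 1)) ≤ √K / 2`. The stated bounds then follow
numerically from `2 / e ≤ ∫₀¹ w^{-1/2} e^{-w} dw ≤ 2`.
-/

open Real MeasureTheory intervalIntegral Set

lemma hasDerivAt_neg_inv_add_one {x : ℝ} (hx : x + 1 ≠ 0) :
    HasDerivAt (fun z : ℝ => -(z + 1)⁻¹) ((x + 1) ^ 2)⁻¹ x := by
  rw [show ((x + 1) ^ 2)⁻¹ = -(-((x + 1) ^ 2)⁻¹ * 1) by ring]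
  exact ((hasDerivAt_inv hx).comp x ((hasDerivAt_id x).add_const 1)).neg

lemma tendsto_neg_inv_add_one_atTop :
    Filter.Tendsto (fun z : ℝ => -(z + 1)⁻¹) Filter.atTop (nhds 0) := by
  simpa using (tendsto_inv_atTop_zero.comp
    (Filter.tendsto_atTop_add_const_right _ (1 : ℝ) Filter.tendsto_id)).neg

lemma integrableOn_Ioi_inv_add_one_sq {c : ℝ} (hc : -1 < c) :
    IntegrableOn (fun z : ℝ => ((z + 1) ^ 2)⁻¹) (Ioi c) :=
  integrableOn_Ioi_deriv_of_nonneg'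
    (fun x hx => hasDerivAt_neg_inv_add_one (by linarith [mem_Ici.mp hx]))
    (fun x _ => by positivity) tendsto_neg_inv_add_one_atTop

lemma integral_Ioi_inv_add_one_sq {c : ℝ} (hc : -1 < c) :
    ∫ z in Ioi c, ((z + 1) ^ 2)⁻¹ = (c + 1)⁻¹ := by
  rw [integral_Ioi_of_hasDerivAt_of_nonneg'
    (fun x hx => hasDerivAt_neg_inv_add_one (by linarith [mem_Ici.mp hx]))
    (fun x _ => by positivity) tendsto_neg_inv_add_one_atTop]
  ring

lemma integral_zero_one_rpow {r : ℝ} (hr : -1 < r) : ∫ w in (0 : ℝ)..1, w ^ r = (r + 1)⁻¹ := by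
  rw [integral_rpow (Or.inl hr), one_rpow, zero_rpow (by linarith), sub_zero, one_div]

section LowerIncompleteGamma

variable {r : ℝ}

lemma intervalIntegrable_rpow_mul_exp_neg (hr : -1 < r) :
    IntervalIntegrable (fun w : ℝ => w ^ r * exp (-w)) volume 0 1 :=
  (intervalIntegrable_rpow' hr).mul_continuousOn (by fun_prop)

lemma exp_neg_one_mul_inv_le_integral_rpow_mul_exp_neg (hr : -1 < r) :
    exp (-1) * (r + 1)⁻¹ ≤ ∫ w in (0 : ℝ)..1, w ^ r * exp (-w) := by
  rw [← integral_zero_one_rpow hr, ← intervalIntegral.integral_const_mul]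
  refine integral_mono_on zero_le_one ((intervalIntegrable_rpow' hr).const_mul _)
    (intervalIntegrable_rpow_mul_exp_neg hr) fun w hw => ?_
  rw [mul_comm]
  exact mul_le_mul_of_nonneg_left (exp_le_exp.mpr (by linarith [hw.2])) (rpow_nonneg hw.1 _)

lemma integral_rpow_mul_exp_neg_le_inv (hr : -1 < r) :
    ∫ w in (0 : ℝ)..1, w ^ r * exp (-w) ≤ (r + 1)⁻¹ := by
  rw [← integral_zero_one_rpow hr]
  refine integral_mono_on zero_le_one (intervalIntegrable_rpow_mul_exp_neg hr)
    (intervalIntegrable_rpow' hr) fun w hw => ?_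
  exact mul_le_of_le_one_right (rpow_nonneg hw.1 _) (exp_le_one_iff.mpr (by linarith [hw.1]))

end LowerIncompleteGamma

section HalfInvSqSum

variable {ι : Type*} [Fintype ι] (a : ι → ℝ)

-- The function `h` of the statement.
noncomputable def halfInvSqSum (z : ℝ) : ℝ := ∑ j, 1 / (2 * (z + a j + 1) ^ 2)

lemma halfInvSqSum_nonneg (z : ℝ) : 0 ≤ halfInvSqSum a z :=
  Finset.sum_nonneg fun _ _ => by positivity

lemma measurable_halfInvSqSum : Measurable (halfInvSqSum a) := by
  unfold halfInvSqSum
  fun_prop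

variable {a}

lemma halfInvSqSum_le (ha : ∀ j, 0 ≤ a j) {z : ℝ} (hz : -1 < z) :
    halfInvSqSum a z ≤ Fintype.card ι / 2 * ((z + 1) ^ 2)⁻¹ := by
  calc halfInvSqSum a z ≤ ∑ _j : ι, 1 / (2 * (z + 1) ^ 2) := by
        refine Finset.sum_le_sum fun j _ => one_div_le_one_div_of_le (by nlinarith) ?_
        have := ha j
        nlinarith
    _ = Fintype.card ι / 2 * ((z + 1) ^ 2)⁻¹ := by
        rw [Finset.sum_const, Finset.card_univ, nsmul_eq_mul]
        field_simp

lemma halfInvSqSum_mul_exp_neg_le (ha : ∀ j, 0 ≤ a j) {z : ℝ} (hz : -1 < z) :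
    halfInvSqSum a z * exp (-halfInvSqSum a z) ≤ Fintype.card ι / 2 * ((z + 1) ^ 2)⁻¹ :=
  (mul_le_of_le_one_right (halfInvSqSum_nonneg a z)
    (exp_le_one_iff.mpr (neg_nonpos.mpr (halfInvSqSum_nonneg a z)))).trans
    (halfInvSqSum_le ha hz)

lemma integrableOn_Ioi_halfInvSqSum_mul_exp_neg (ha : ∀ j, 0 ≤ a j) {c : ℝ} (hc : -1 < c) :
    IntegrableOn (fun z => halfInvSqSum a z * exp (-halfInvSqSum a z)) (Ioi c) := by
  refine ((integrableOn_Ioi_inv_add_one_sq hc).const_mul (Fintype.card ι / 2 : ℝ)).mono' ?_ ?_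
  · exact (measurable_halfInvSqSum a).mul
      (measurable_exp.comp (measurable_halfInvSqSum a).neg) |>.aestronglyMeasurable
  · filter_upwards [ae_restrict_mem measurableSet_Ioi] with z hz
    rw [norm_of_nonneg (mul_nonneg (halfInvSqSum_nonneg a z) (exp_pos _).le)]
    exact halfInvSqSum_mul_exp_neg_le ha (hc.trans hz)

lemma setIntegral_Ioi_halfInvSqSum_mul_exp_neg_le (ha : ∀ j, 0 ≤ a j) {c z₀ : ℝ} (hc : -1 < c)
    (hcz : c ≤ z₀) :
    ∫ z in Ioi c, halfInvSqSum a z * exp (-halfInvSqSum a z) ≤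
      (z₀ - c) * exp (-1) + Fintype.card ι / 2 * (z₀ + 1)⁻¹ := by
  set f := fun z => halfInvSqSum a z * exp (-halfInvSqSum a z)
  have hf := integrableOn_Ioi_halfInvSqSum_mul_exp_neg ha hc
  have hsplit : ∫ z in Ioi c, f z = (∫ z in Ioc c z₀, f z) + ∫ z in Ioi z₀, f z := by
    rw [← Ioc_union_Ioi_eq_Ioi hcz, setIntegral_union (Ioc_disjoint_Ioi le_rfl) measurableSet_Ioi
      (hf.mono_set Ioc_subset_Ioi_self) (hf.mono_set (Ioi_subset_Ioi hcz))]
  have hhead : ∫ z in Ioc c z₀, f z ≤ (z₀ - c) * exp (-1) := by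
    have hbound : ∀ z ∈ Ioc c z₀, ‖f z‖ ≤ exp (-1) := fun z _ => by
      rw [norm_of_nonneg (mul_nonneg (halfInvSqSum_nonneg a z) (exp_pos _).le)]
      exact mul_exp_neg_le_exp_neg_one _
    calc ∫ z in Ioc c z₀, f z ≤ ‖∫ z in Ioc c z₀, f z‖ := le_norm_self _
      _ ≤ exp (-1) * volume.real (Ioc c z₀) :=
          norm_setIntegral_le_of_norm_le_const measure_Ioc_lt_top hbound
      _ = (z₀ - c) * exp (-1) := by rw [volume_real_Ioc_of_le hcz, mul_comm]
  have htail : ∫ z in Ioi z₀, f z ≤ Fintype.card ι / 2 * (z₀ + 1)⁻¹ := by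
    have hz₀ : -1 < z₀ := hc.trans_le hcz
    rw [← integral_Ioi_inv_add_one_sq hz₀, ← MeasureTheory.integral_const_mul]
    exact setIntegral_mono_on (hf.mono_set (Ioi_subset_Ioi hcz))
      ((integrableOn_Ioi_inv_add_one_sq hz₀).const_mul _)
      measurableSet_Ioi fun z hz => halfInvSqSum_mul_exp_neg_le ha (hz₀.trans hz)
  linarith

end HalfInvSqSum

lemma sqrt_natCast_le_sqrt_two_mul_sub_one_add_one (n : ℕ) :
    √(n : ℝ) ≤ √(2 * ((n : ℝ) - 1)) + 1 := by
  rcases Nat.eq_zero_or_pos n with rfl | hpos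
  · norm_num
  · have hn : (1 : ℝ) ≤ n := by exact_mod_cast hpos
    rw [sqrt_le_iff]
    refine ⟨by positivity, ?_⟩
    nlinarith [sq_sqrt (show (0 : ℝ) ≤ 2 * ((n : ℝ) - 1) by linarith),
      sqrt_nonneg (2 * ((n : ℝ) - 1))]

lemma setIntegral_Ioi_zero_halfInvSqSum_mul_exp_neg_le {ι : Type*} [Fintype ι] {a : ι → ℝ}
    (ha : ∀ j, 0 ≤ a j) :
    ∫ z in Ioi 0, halfInvSqSum a z * exp (-halfInvSqSum a z) ≤
      √2 * √((Fintype.card ι : ℝ) - 1) * exp (-1) + √(Fintype.card ι : ℝ) / 2 := by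
  have hsplit := setIntegral_Ioi_halfInvSqSum_mul_exp_neg_le ha (by norm_num : (-1 : ℝ) < 0)
    (sqrt_nonneg (2 * ((Fintype.card ι : ℝ) - 1)))
  have htail : (Fintype.card ι : ℝ) / 2 * (√(2 * ((Fintype.card ι : ℝ) - 1)) + 1)⁻¹ ≤
      √(Fintype.card ι : ℝ) / 2 := by
    have hz₀ : 0 < √(2 * ((Fintype.card ι : ℝ) - 1)) + 1 := by positivity
    rw [← div_eq_mul_inv, div_le_div_iff₀ hz₀ two_pos, div_mul_eq_mul_div, div_le_iff₀ two_pos]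
    nlinarith [mul_le_mul_of_nonneg_left (sqrt_natCast_le_sqrt_two_mul_sub_one_add_one
      (Fintype.card ι)) (sqrt_nonneg (Fintype.card ι : ℝ)),
      mul_self_sqrt (Nat.cast_nonneg (Fintype.card ι) : (0 : ℝ) ≤ Fintype.card ι)]
  rw [sub_zero] at hsplit
  rw [sqrt_mul zero_le_two] at hsplit htail
  linarith

section Numerics

variable {n A I : ℝ}

lemma exp_one_div_sqrt_two : exp 1 / √2 = exp 1 * √2 / 2 := by
  field_simp
  rw [sq_sqrt zero_le_two]

lemma le_two_mul_sqrt_two_mul_sqrt_sub_one_add (hA : A ≤ √2 * √(n - 1) * exp (-1) + √n / 2)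
    (hI : exp (-1) * 2 ≤ I) : A ≤ 2 * √2 * √(n - 1) + exp 1 / √2 * √n * I := by
  have he : exp 1 * exp (-1) = 1 := by rw [← exp_add]; norm_num
  have hs2 : 1 ≤ √2 := one_le_sqrt.mpr one_le_two
  have h₀ : 0 ≤ √2 * √(n - 1) := by positivity
  rw [exp_one_div_sqrt_two]
  calc A ≤ √2 * √(n - 1) * exp (-1) + √n / 2 := hA
    _ ≤ 2 * √2 * √(n - 1) + √2 * √n := by
        nlinarith [mul_le_mul_of_nonneg_left (exp_le_one_iff.mpr (by norm_num) : exp (-1) ≤ 1) h₀,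
          mul_le_mul_of_nonneg_right hs2 (sqrt_nonneg n), sqrt_nonneg n]
    _ = 2 * √2 * √(n - 1) + exp 1 * √2 / 2 * √n * (exp (-1) * 2) := by
        linear_combination (-√2 * √n) * he
    _ ≤ 2 * √2 * √(n - 1) + exp 1 * √2 / 2 * √n * I := by gcongr

lemma two_mul_sqrt_two_mul_sqrt_sub_one_add_le (hI : I ≤ 2) :
    2 * √2 * √(n - 1) + exp 1 / √2 * √n * I ≤ 5.7 * √n * (exp 1 / 2) := by
  have hs2 : √2 < 1.415 := (sqrt_lt' (by norm_num)).mpr (by norm_num)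
  have he_lt := exp_one_lt_d9
  have he_gt := exp_one_gt_d9
  rw [exp_one_div_sqrt_two]
  calc 2 * √2 * √(n - 1) + exp 1 * √2 / 2 * √n * I
        ≤ 2 * √2 * √n + exp 1 * √2 / 2 * √n * 2 := by gcongr; linarith
    _ = √2 * (2 + exp 1) * √n := by ring
    _ ≤ 6.7 * √n := by gcongr; nlinarith [sqrt_nonneg 2]
    _ ≤ 5.7 * √n * (exp 1 / 2) := by nlinarith [sqrt_nonneg n]

lemma two_mul_exp_one_mul_le (hA : A ≤ √2 * √(n - 1) * exp (-1) + √n / 2) :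
    2 * exp 1 * A ≤ 5.7 * √n := by
  have he : exp 1 * exp (-1) = 1 := by rw [← exp_add]; norm_num
  have hs2 : √2 < 1.415 := (sqrt_lt' (by norm_num)).mpr (by norm_num)
  have he_lt := exp_one_lt_d9
  calc 2 * exp 1 * A ≤ 2 * exp 1 * (√2 * √(n - 1) * exp (-1) + √n / 2) := by gcongr
    _ = 2 * √2 * √(n - 1) + exp 1 * √n := by linear_combination (2 * √2 * √(n - 1)) * he
    _ ≤ (2 * √2 + exp 1) * √n := by
        nlinarith [mul_le_mul_of_nonneg_left (sqrt_le_sqrt (by linarith) : √(n - 1) ≤ √n)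
          (sqrt_nonneg 2)]
    _ ≤ 5.7 * √n := by gcongr; linarith

end Numerics

theorem stmt13 (K : ℕ) (a : Fin K → ℝ) (ha : ∀ j, 0 ≤ a j) :
    ((∫ z in Set.Ioi (0 : ℝ),
        (∑ j, 1 / (2 * (z + a j + 1) ^ 2)) *
          Real.exp (-(∑ j, 1 / (2 * (z + a j + 1) ^ 2)))) ≤
      2 * Real.sqrt 2 * Real.sqrt ((K : ℝ) - 1) +
        (Real.exp 1 / Real.sqrt 2) * Real.sqrt (K : ℝ) *
          ∫ w in (0 : ℝ)..1, w ^ (-(1 : ℝ) / 2) * Real.exp (-w)) ∧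
    (2 * Real.sqrt 2 * Real.sqrt ((K : ℝ) - 1) +
        (Real.exp 1 / Real.sqrt 2) * Real.sqrt (K : ℝ) *
          ∫ w in (0 : ℝ)..1, w ^ (-(1 : ℝ) / 2) * Real.exp (-w)) ≤
      5.7 * Real.sqrt (K : ℝ) * (Real.exp 1 / 2) ∧
    2 * Real.exp 1 *
        (∫ z in Set.Ioi (0 : ℝ),
          (∑ j, 1 / (2 * (z + a j + 1) ^ 2)) *
            Real.exp (-(∑ j, 1 / (2 * (z + a j + 1) ^ 2)))) ≤
      5.7 * Real.sqrt (K : ℝ) := by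
  have hA : ∫ z in Ioi 0, halfInvSqSum a z * exp (-halfInvSqSum a z) ≤
      √2 * √((K : ℝ) - 1) * exp (-1) + √(K : ℝ) / 2 := by
    simpa using setIntegral_Ioi_zero_halfInvSqSum_mul_exp_neg_le ha
  have hr : -1 < -(1 : ℝ) / 2 := by norm_num
  have hr' : (-(1 : ℝ) / 2 + 1)⁻¹ = 2 := by norm_num
  have hI₁ := exp_neg_one_mul_inv_le_integral_rpow_mul_exp_neg hr
  have hI₂ := integral_rpow_mul_exp_neg_le_inv hr
  rw [hr'] at hI₁ hI₂
  exact ⟨le_two_mul_sqrt_two_mul_sqrt_sub_one_add hA hI₁,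
    two_mul_sqrt_two_mul_sqrt_sub_one_add_le hI₂, two_mul_exp_one_mul_le hA⟩
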